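/- For every λ ∈ [0,1] and every positive integer k, the k-fold Minkowski sum of S_λ satisfies k × S_λ ⊆ S_λ^k (as subsets of ℝ/ℤ). -/

import Mathlib

open MeasureTheory Real Set Filter Topology ENNReal

noncomputable section

/-- The index set `K_λ^k = {m ∈ ℕ : ∃ j ∈ ℕ*, 2^j ≤ m ≤ 2^j(1+λ+1/j) - k + 1}`. -/
def Kset (lam : ℝ) (k : ℕ) : Set ℕ :=
  {m | ∃ j : ℕ, 0 < j ∧ (2 : ℝ) ^ j ≤ (m : ℝ) ∧
    (m : ℝ) ≤ (2 : ℝ) ^ j * (1 + lam + 1 / (j : ℝ)) - (k : ℝ) + 1}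

/-- The Cantor-type set `S_λ^k ⊆ ℝ/ℤ`: binary expansions `x = ∑ x_i 2^{-(i+1)}`
with digits `x_i ∈ {0,1}` vanishing on `K_λ^k`. -/
def Sset (lam : ℝ) (k : ℕ) : Set (AddCircle (1 : ℝ)) :=
  {y | ∃ x : ℕ → ℕ, (∀ i, x i ≤ 1) ∧ (∀ i ∈ Kset lam k, x i = 0) ∧
    y = ((∑' i : ℕ, (x i : ℝ) / 2 ^ (i + 1) : ℝ) : AddCircle (1 : ℝ))}

/-- The `k`-fold Minkowski sum `k × E = E + ⋯ + E` in `ℝ/ℤ`. -/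
def kFold1 (k : ℕ) (E : Set (AddCircle (1 : ℝ))) : Set (AddCircle (1 : ℝ)) :=
  {x | ∃ g : Fin k → AddCircle (1 : ℝ), (∀ i, g i ∈ E) ∧ x = ∑ i, g i}

/-- Fourier coefficient `μ̂(n)` of a measure on `ℝ/ℤ`. -/
def muHat1 (μ : Measure (AddCircle (1 : ℝ))) (n : ℤ) : ℂ :=
  ∫ t, fourier (-n) t ∂μ

/-- The `α`-energy `I_α(μ) = ∑_{n ≥ 1} |μ̂(n)|²/(1+n)^{1-α}` of `μ` is finite. -/
def HasFiniteEnergy1 (α : ℝ) (μ : Measure (AddCircle (1 : ℝ))) : Prop :=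
  Summable fun n : ℕ => ‖muHat1 μ (n + 1)‖ ^ 2 / (1 + ((n : ℝ) + 1)) ^ (1 - α)

/-- `C_α(E) = 0`: every probability measure supported on a compact subset of `E`
has infinite `α`-energy. -/
def CapacityZero1 (α : ℝ) (E : Set (AddCircle (1 : ℝ))) : Prop :=
  ∀ μ : Measure (AddCircle (1 : ℝ)), IsProbabilityMeasure μ →
    (∃ K, K ⊆ E ∧ IsCompact K ∧ μ Kᶜ = 0) → ¬ HasFiniteEnergy1 α μ

/-!
Adding the digit sequences of `k` points of `S_λ` gives a sequence `c` with values in `[0, k]`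
vanishing on `K_λ^1`, and `x = ∑ c_i 2^{-(i+1)}` represents the sum in `ℝ/ℤ`. For `m ∈ K_λ^k`
the whole window `m, …, m + k - 1` lies in `K_λ^1`, so the fractional part of `2^m x` is
`∑_{i ≥ k} c_{m+i} 2^{-(i+1)} < k 2^{-k} ≤ 1/2`; the inequality is strict because `c` also
vanishes at `2^{m+k+1} ∈ K_λ^1`. Hence the `m`-th binary digit of `x mod 1` is `0`.
-/

def dyadicSum (c : ℕ → ℕ) : ℝ :=
  ∑' i, (c i : ℝ) / 2 ^ (i + 1)

section dyadicSum

variable {c : ℕ → ℕ} {k : ℕ}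

lemma div_two_pow_succ (a : ℝ) (i : ℕ) : a / 2 ^ (i + 1) = a / 2 / 2 ^ i := by
  rw [pow_succ', div_div]

lemma summable_natCast_div_two_pow_succ (hc : ∀ i, c i ≤ k) :
    Summable fun i => (c i : ℝ) / 2 ^ (i + 1) := by
  refine Summable.of_nonneg_of_le (fun i => by positivity) (fun i => ?_)
    (summable_geometric_two' k)
  rw [← div_two_pow_succ]
  gcongr
  exact_mod_cast hc i

lemma dyadicSum_nonneg (c : ℕ → ℕ) : 0 ≤ dyadicSum c :=
  tsum_nonneg fun i => by positivity

lemma dyadicSum_const (k : ℕ) : dyadicSum (fun _ => k) = k := by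
  simp only [dyadicSum, div_two_pow_succ, tsum_geometric_two']

lemma dyadicSum_lt {j : ℕ} (hc : ∀ i, c i ≤ k) (hj : c j < k) : dyadicSum c < k := by
  rw [← dyadicSum_const k]
  refine Summable.tsum_lt_tsum (i := j) (fun i => ?_) ?_ (summable_natCast_div_two_pow_succ hc)
    (summable_natCast_div_two_pow_succ (c := fun _ => k) fun _ => le_rfl)
  · gcongr; exact_mod_cast hc i
  · gcongr

lemma dyadicSum_sum {ι : Type*} [Fintype ι] {d : ι → ℕ → ℕ} (hd : ∀ l i, d l i ≤ k) :
    dyadicSum (fun i => ∑ l, d l i) = ∑ l, dyadicSum (d l) := by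
  simp only [dyadicSum, Nat.cast_sum, Finset.sum_div]
  exact Summable.tsum_finsetSum fun l _ => summable_natCast_div_two_pow_succ (hd l)

lemma dyadicSum_eq_sum_add (hc : ∀ i, c i ≤ k) (n : ℕ) :
    dyadicSum c = ∑ i ∈ Finset.range n, (c i : ℝ) / 2 ^ (i + 1) +
      dyadicSum (fun i => c (i + n)) / 2 ^ n := by
  rw [dyadicSum, ← (summable_natCast_div_two_pow_succ hc).sum_add_tsum_nat_add n, dyadicSum,
    ← tsum_div_const]
  congr 1
  refine tsum_congr fun i => ?_
  rw [add_right_comm, pow_add, div_div]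

lemma exists_nat_eq_two_pow_mul_sum (c : ℕ → ℕ) (n : ℕ) :
    ∃ A : ℕ, 2 ^ n * ∑ i ∈ Finset.range n, (c i : ℝ) / 2 ^ (i + 1) = A := by
  induction n with
  | zero => exact ⟨0, by simp⟩
  | succ n ih =>
    obtain ⟨A, hA⟩ := ih
    refine ⟨2 * A + c n, ?_⟩
    rw [Finset.sum_range_succ, mul_add, pow_succ, mul_comm _ (2 : ℝ), mul_assoc, hA]
    push_cast
    field_simp

lemma exists_nat_two_pow_mul_dyadicSum (hc : ∀ i, c i ≤ k) (n : ℕ) :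
    ∃ A : ℕ, 2 ^ n * dyadicSum c = A + dyadicSum (fun i => c (i + n)) := by
  obtain ⟨A, hA⟩ := exists_nat_eq_two_pow_mul_sum c n
  refine ⟨A, ?_⟩
  rw [dyadicSum_eq_sum_add hc n, mul_add, hA, mul_div_cancel₀ _ (by positivity)]

lemma dyadicSum_lt_half {j : ℕ} (hc : ∀ i, c i ≤ k) (hlow : ∀ i < k, c i = 0)
    (hj : k ≤ j) (hcj : c j = 0) : dyadicSum c < 1 / 2 := by
  rcases k.eq_zero_or_pos with rfl | hk
  · simp [dyadicSum, show c = 0 from funext fun i => Nat.le_zero.mp (hc i)]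
  have hshift : dyadicSum c = dyadicSum (fun i => c (i + k)) / 2 ^ k := by
    rw [dyadicSum_eq_sum_add hc k, Finset.sum_eq_zero fun i hi => by
      rw [hlow i (Finset.mem_range.mp hi), Nat.cast_zero, zero_div], zero_add]
  have htail : dyadicSum (fun i => c (i + k)) < k :=
    dyadicSum_lt (j := j - k) (fun i => hc _) (by rw [Nat.sub_add_cancel hj, hcj]; exact hk)
  have hpow : 2 * k ≤ 2 ^ k := by
    have := Nat.lt_two_pow_self (n := k - 1)
    have : 2 ^ k = 2 * 2 ^ (k - 1) := by rw [← pow_succ', Nat.sub_add_cancel hk]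
    omega
  rw [hshift, div_lt_iff₀ (by positivity)]
  have : (2 * k : ℝ) ≤ 2 ^ k := by exact_mod_cast hpow
  linarith

end dyadicSum

lemma add_mem_Kset_one {lam : ℝ} {k m τ : ℕ} (hm : m ∈ Kset lam k) (hτ : τ < k) :
    m + τ ∈ Kset lam 1 := by
  obtain ⟨j, hj, hlo, hhi⟩ := hm
  have : (τ : ℝ) + 1 ≤ k := by exact_mod_cast hτ
  exact ⟨j, hj, by push_cast; linarith, by push_cast; linarith⟩

lemma two_pow_mem_Kset_one {lam : ℝ} (hlam : 0 ≤ lam) {j : ℕ} (hj : 0 < j) :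
    2 ^ j ∈ Kset lam 1 := by
  refine ⟨j, hj, by push_cast; rfl, ?_⟩
  have : (0 : ℝ) ≤ 2 ^ j * (lam + 1 / j) := by positivity
  push_cast
  linarith

lemma Real.digits_fract_two_eq_zero {x u : ℝ} {m : ℕ} {N : ℤ} (h : 2 ^ m * x = N + u)
    (hu₀ : 0 ≤ u) (hu : u < 1 / 2) : Real.digits (Int.fract x) 2 m = 0 := by
  have hfloor : ⌊Int.fract x * 2 ^ (m + 1)⌋ = 2 * (N - ⌊x⌋ * 2 ^ m) := by
    have : Int.fract x * 2 ^ (m + 1) = ((2 * (N - ⌊x⌋ * 2 ^ m) : ℤ) : ℝ) + 2 * u := by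
      rw [Int.fract, pow_succ]
      push_cast
      linear_combination 2 * h
    rw [this, Int.floor_intCast_add,
      (Int.floor_eq_zero_iff (a := 2 * u)).mpr ⟨by linarith, by linarith⟩, add_zero]
  ext
  rw [Real.digits, Fin.val_ofNat, ← Int.floor_toNat, Nat.cast_ofNat, hfloor]
  simp only [Fin.val_zero]
  omega

lemma dyadicSum_digits_two {t : ℝ} (ht : t ∈ Ico 0 1) :
    dyadicSum (fun i => Real.digits t 2 i) = t := by
  conv_rhs => rw [← Real.ofDigits_digits (b := 2) (by norm_num) ht]
  simp only [dyadicSum, Real.ofDigits, Real.ofDigitsTerm, div_eq_mul_inv, Nat.cast_ofNat]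

lemma digits_fract_dyadicSum_eq_zero {c : ℕ → ℕ} {k m j : ℕ} (hc : ∀ i, c i ≤ k)
    (hwindow : ∀ i < k, c (m + i) = 0) (hj : m + k ≤ j) (hcj : c j = 0) :
    Real.digits (Int.fract (dyadicSum c)) 2 m = 0 := by
  obtain ⟨A, hA⟩ := exists_nat_two_pow_mul_dyadicSum hc m
  refine Real.digits_fract_two_eq_zero (N := A) (by exact_mod_cast hA) (dyadicSum_nonneg _) ?_
  refine dyadicSum_lt_half (j := j - m) (fun i => hc _) (fun i hi => ?_) (by omega) ?_
  · rw [add_comm]; exact hwindow i hi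
  · rwa [Nat.sub_add_cancel (by omega)]

theorem stmt14_general (lam : ℝ) (h0 : 0 ≤ lam) (k : ℕ) :
    kFold1 k (Sset lam 1) ⊆ Sset lam k := by
  rintro _ ⟨g, hg, rfl⟩
  choose d hd₁ hdK hg using hg
  set c : ℕ → ℕ := fun i => ∑ l, d l i
  have hck : ∀ i, c i ≤ k := fun i => by
    simpa using Finset.sum_le_sum fun l (_ : l ∈ Finset.univ) => hd₁ l i
  have hcK : ∀ m ∈ Kset lam 1, c m = 0 := fun m hm =>
    Finset.sum_eq_zero fun l _ => hdK l m hm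
  have hsum : ∑ l, g l = (dyadicSum c : AddCircle (1 : ℝ)) := by
    rw [dyadicSum_sum hd₁, Finset.sum_congr rfl fun l _ => hg l]
    exact (map_sum (QuotientAddGroup.mk' (AddSubgroup.zmultiples (1 : ℝ))) _ _).symm
  refine ⟨fun i => Real.digits (Int.fract (dyadicSum c)) 2 i,
    fun i => Nat.le_of_lt_succ (Fin.is_lt _), fun m hm => ?_, ?_⟩
  · have hpow : m + k < 2 ^ (m + k + 1) :=
      Nat.lt_two_pow_self.trans (Nat.pow_lt_pow_succ one_lt_two)
    simp only [digits_fract_dyadicSum_eq_zero hck (fun i hi => hcK _ (add_mem_Kset_one hm hi))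
      hpow.le (hcK _ (two_pow_mem_Kset_one h0 (m + k).succ_pos)), Fin.val_zero]
  · rw [hsum, ← AddCircle.coe_fract]
    exact congrArg _ (dyadicSum_digits_two ⟨Int.fract_nonneg _, Int.fract_lt_one _⟩).symm

/-- Lemma 3.4(1): for every `λ ∈ [0,1]` and positive integer
`k`, the `k`-fold Minkowski sum satisfies `k × S_λ ⊆ S_λ^k` in `ℝ/ℤ`. -/
theorem stmt14 (lam : ℝ) (h0 : 0 ≤ lam) (h1 : lam ≤ 1) (k : ℕ) (hk : 0 < k) :
    kFold1 k (Sset lam 1) ⊆ Sset lam k :=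
  stmt14_general lam h0 k

end
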